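/- Let f: R^d → R be L-smooth and bounded below by f(θ*). Consider iterates θ_{t+1} = θ_t − η_t·ĝ_t where E[ĝ_t | θ_t] satisfies ⟨E[ĝ_t|θ_t], ∇f(θ_t)⟩ ≥ μ||∇f(θ_t)||² and E[||ĝ_t||² | θ_t] ≤ ||∇f(θ_t)||² + σ², with 0 < μ ≤ 1. With step size η_t = μ/(L√(K·t)) for a constant K ≥ 1, it holds that min_{1≤t≤T} E[||∇f(θ_t)||²] ≤ ( 2√K·L·(f(θ_1) − f(θ*))/μ² + √K·σ²·(1 + log T) ) / √T. -/

import Mathlib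

/-!
For an `L`-smooth `f`, the descent lemma at `θ_t` along the step `-η_t ĝ_t`, integrated and
combined with the coherence and second-moment bounds (moved from conditional to plain
expectations by the tower property), gives
`E f(θ_{t+1}) ≤ E f(θ_t) - (η_t μ / 2) E‖∇f(θ_t)‖² + (L η_t² / 2) σ²` as long as `L η_t ≤ μ`.
For `η_t = μ / (L √(K t))` the descent coefficient is of order `1 / √t` and the noise of order
`1 / t`. Telescoping over `t = 1, …, T`, the minimum is bounded by the `1 / √t`-weighted
average, and the noise by the harmonic sum `H_T ≤ 1 + log T`.
-/

open MeasureTheory Real Finset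
open scoped NNReal ENNReal RealInnerProductSpace

theorem LipschitzWith.memLp_comp {Ω E F : Type*} {m0 : MeasurableSpace Ω} {μ : Measure Ω}
    [IsFiniteMeasure μ] [NormedAddCommGroup E] [NormedAddCommGroup F] {p : ℝ≥0∞} {K : ℝ≥0}
    {g : E → F} (hg : LipschitzWith K g) {y : Ω → E} (hy : MemLp y p μ) :
    MemLp (fun ω => g (y ω)) p μ := by
  have h := (hg.sub (LipschitzWith.const (g 0))).comp_memLp (by simp) hy
  have hsplit : (fun ω => g (y ω)) = (fun z => g z - g 0) ∘ y + fun _ => g 0 := by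
    ext ω; simp
  exact hsplit ▸ h.add (memLp_const (g 0))

section Smooth

variable {E : Type*} [NormedAddCommGroup E] [InnerProductSpace ℝ E] [CompleteSpace E]
  {f : E → ℝ} {L : ℝ≥0}

theorem abs_sub_sub_inner_gradient_le (hf : Differentiable ℝ f)
    (hL : LipschitzWith L (gradient f)) (x y : E) :
    |f y - f x - ⟪gradient f x, y - x⟫| ≤ L / 2 * ‖y - x‖ ^ 2 := by
  set v := y - x
  have hderiv : ∀ s : ℝ, HasDerivAt (fun s : ℝ => f (x + s • v) - f x - s * ⟪gradient f x, v⟫)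
      (⟪gradient f (x + s • v) - gradient f x, v⟫) s := by
    intro s
    have hline : HasDerivAt (fun s : ℝ => x + s • v) v s := by
      simpa using ((hasDerivAt_id s).smul_const v).const_add x
    have := (((hf _).hasGradientAt.hasFDerivAt.comp_hasDerivAt s hline).sub_const (f x)).sub
      ((hasDerivAt_id s).mul_const ⟪gradient f x, v⟫)
    refine this.congr_deriv ?_
    rw [InnerProductSpace.toDual_apply_apply, inner_sub_left, one_mul]
  have hbound := image_norm_le_of_norm_deriv_right_le_deriv_boundary
    (fun s _ => (hderiv s).continuousAt.continuousWithinAt)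
    (fun s _ => (hderiv s).hasDerivWithinAt)
    (B := fun s => L / 2 * s ^ 2 * ‖v‖ ^ 2) (B' := fun s => L * s * ‖v‖ ^ 2) (by simp)
    (fun s => (((hasDerivAt_pow 2 s).const_mul (L / 2 : ℝ)).mul_const (‖v‖ ^ 2)).congr_deriv
      (by push_cast; ring))
    (fun s hs => by
      calc ‖⟪gradient f (x + s • v) - gradient f x, v⟫‖
          ≤ ‖gradient f (x + s • v) - gradient f x‖ * ‖v‖ := by
            rw [Real.norm_eq_abs]; exact abs_real_inner_le_norm _ _
        _ ≤ L * ‖(x + s • v) - x‖ * ‖v‖ := by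
            gcongr; simpa [dist_eq_norm] using hL.dist_le_mul (x + s • v) x
        _ = L * s * ‖v‖ ^ 2 := by
            rw [add_sub_cancel_left, norm_smul, Real.norm_of_nonneg hs.1]; ring)
    (Set.right_mem_Icc.2 zero_le_one)
  simpa [v] using hbound

end Smooth

section Expectation

variable {Ω E : Type*} {m m0 : MeasurableSpace Ω} {μ : Measure Ω}
  [NormedAddCommGroup E] [InnerProductSpace ℝ E]

theorem MeasureTheory.MemLp.integrable_inner {g X : Ω → E} (hg : MemLp g 2 μ)
    (hX : MemLp X 2 μ) : Integrable (fun ω => ⟪g ω, X ω⟫) μ := by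
  refine (L2.integrable_inner (𝕜 := ℝ) (hg.toLp g) (hX.toLp X)).congr ?_
  filter_upwards [hg.coeFn_toLp, hX.coeFn_toLp] with ω hgω hXω
  rw [hgω, hXω]

theorem integral_inner_condExp_left [IsFiniteMeasure μ] [CompleteSpace E] (hm : m ≤ m0)
    {g X : Ω → E} (hg : MemLp g 2 μ) (hX : MemLp X 2 μ) (hXm : AEStronglyMeasurable[m] X μ) :
    ∫ ω, ⟪(μ[g|m]) ω, X ω⟫ ∂μ = ∫ ω, ⟪g ω, X ω⟫ ∂μ := by
  -- in `L²`, conditional expectation is the orthogonal projection onto `m`-measurable functions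
  have h := inner_condExpL2_eq_inner_fun (𝕜 := ℝ) hm (hg.toLp g) (hX.toLp X)
    (hXm.congr hX.coeFn_toLp.symm)
  rw [L2.inner_def, L2.inner_def] at h
  calc ∫ ω, ⟪(μ[g|m]) ω, X ω⟫ ∂μ
      = ∫ ω, ⟪(condExpL2 E ℝ hm (hg.toLp g) : Ω →₂[μ] E) ω, (hX.toLp X) ω⟫ ∂μ := by
        refine integral_congr_ae ?_
        filter_upwards [hg.condExpL2_ae_eq_condExp (𝕜 := ℝ) hm, hX.coeFn_toLp] with ω h1 h2
        rw [h1, h2]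
    _ = ∫ ω, ⟪(hg.toLp g) ω, (hX.toLp X) ω⟫ ∂μ := h
    _ = ∫ ω, ⟪g ω, X ω⟫ ∂μ := by
        refine integral_congr_ae ?_
        filter_upwards [hg.coeFn_toLp, hX.coeFn_toLp] with ω h1 h2
        rw [h1, h2]

end Expectation

section Descent

variable {Ω E : Type*} {m m0 : MeasurableSpace Ω} {μ : Measure Ω}
  [NormedAddCommGroup E] [InnerProductSpace ℝ E] [CompleteSpace E]
  {f : E → ℝ} {L : ℝ≥0} {x g : Ω → E}

theorem integrable_comp_of_lipschitzWith_gradient [IsFiniteMeasure μ] (hf : Differentiable ℝ f)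
    (hL : LipschitzWith L (gradient f)) (hx : MemLp x 2 μ) : Integrable (fun ω => f (x ω)) μ := by
  have hbound : ∀ ω, ‖f (x ω)‖ ≤ |f 0| + ‖gradient f 0‖ * ‖x ω‖ + L / 2 * ‖x ω‖ ^ 2 := by
    intro ω
    have h1 := abs_le.1 (abs_sub_sub_inner_gradient_le hf hL 0 (x ω))
    have h2 := abs_le.1 (abs_real_inner_le_norm (gradient f 0) (x ω))
    rw [sub_zero] at h1
    rw [Real.norm_eq_abs, abs_le]
    constructor <;> linarith [h1.1, h1.2, h2.1, h2.2, neg_abs_le (f 0), le_abs_self (f 0)]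
  refine Integrable.mono' ?_ (hf.continuous.comp_aestronglyMeasurable hx.1) (ae_of_all _ hbound)
  exact ((integrable_const _).add ((hx.integrable one_le_two).norm.const_mul _)).add
    (hx.norm.integrable_sq.const_mul _)

theorem integral_comp_sub_smul_le [IsFiniteMeasure μ] (hf : Differentiable ℝ f)
    (hL : LipschitzWith L (gradient f)) (hx : MemLp x 2 μ) (hg : MemLp g 2 μ) (η : ℝ) :
    ∫ ω, f (x ω - η • g ω) ∂μ ≤ ∫ ω, f (x ω) ∂μ - η * ∫ ω, ⟪g ω, gradient f (x ω)⟫ ∂μ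
      + L / 2 * η ^ 2 * ∫ ω, ‖g ω‖ ^ 2 ∂μ := by
  have hpt : ∀ ω, f (x ω - η • g ω) ≤
      f (x ω) - η * ⟪g ω, gradient f (x ω)⟫ + L / 2 * η ^ 2 * ‖g ω‖ ^ 2 := by
    intro ω
    have h := (abs_le.1 (abs_sub_sub_inner_gradient_le hf hL (x ω) (x ω - η • g ω))).2
    rw [sub_sub_cancel_left, inner_neg_right, real_inner_smul_right, real_inner_comm, norm_neg,
      norm_smul, Real.norm_eq_abs, mul_pow, sq_abs] at h
    linarith
  have hfx := integrable_comp_of_lipschitzWith_gradient hf hL hx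
  have hinner := (hg.integrable_inner (hL.memLp_comp hx)).const_mul η
  have hsq := hg.norm.integrable_sq.const_mul (L / 2 * η ^ 2)
  calc ∫ ω, f (x ω - η • g ω) ∂μ
      ≤ ∫ ω, (f (x ω) - η * ⟪g ω, gradient f (x ω)⟫ + L / 2 * η ^ 2 * ‖g ω‖ ^ 2) ∂μ :=
        integral_mono (integrable_comp_of_lipschitzWith_gradient hf hL (hx.sub (hg.const_smul η)))
          ((hfx.sub hinner).add hsq) hpt
    _ = _ := by
        rw [integral_add (f := fun ω => f (x ω) - η * ⟪g ω, gradient f (x ω)⟫)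
          (hfx.sub hinner) hsq, integral_sub hfx hinner, integral_const_mul, integral_const_mul]

theorem integral_comp_sub_smul_le_of_condExp [IsProbabilityMeasure μ] (hm : m ≤ m0)
    (hf : Differentiable ℝ f) (hL : LipschitzWith L (gradient f)) (hxm : StronglyMeasurable[m] x)
    (hx : MemLp x 2 μ) (hg : MemLp g 2 μ) {η c σ : ℝ} (hη : 0 ≤ η) (hηL : L * η ≤ c)
    (hcoh : ∀ᵐ ω ∂μ, c * ‖gradient f (x ω)‖ ^ 2 ≤ ⟪(μ[g|m]) ω, gradient f (x ω)⟫)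
    (hsecond : ∀ᵐ ω ∂μ, (μ[fun ω' => ‖g ω'‖ ^ 2|m]) ω ≤ ‖gradient f (x ω)‖ ^ 2 + σ ^ 2) :
    ∫ ω, f (x ω - η • g ω) ∂μ ≤ ∫ ω, f (x ω) ∂μ - η * c / 2 * ∫ ω, ‖gradient f (x ω)‖ ^ 2 ∂μ
      + L / 2 * η ^ 2 * σ ^ 2 := by
  set G := ∫ ω, ‖gradient f (x ω)‖ ^ 2 ∂μ
  have hgrad : MemLp (fun ω => gradient f (x ω)) 2 μ := hL.memLp_comp hx
  have hgradm : AEStronglyMeasurable[m] (fun ω => gradient f (x ω)) μ :=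
    (hL.continuous.comp_stronglyMeasurable hxm).aestronglyMeasurable
  have hG : 0 ≤ G := integral_nonneg fun ω => by positivity
  have hinner : c * G ≤ ∫ ω, ⟪g ω, gradient f (x ω)⟫ ∂μ :=
    calc c * G = ∫ ω, c * ‖gradient f (x ω)‖ ^ 2 ∂μ := (integral_const_mul _ _).symm
      _ ≤ ∫ ω, ⟪(μ[g|m]) ω, gradient f (x ω)⟫ ∂μ :=
        integral_mono_ae (hgrad.norm.integrable_sq.const_mul c)
          ((hg.condExp one_le_two).integrable_inner hgrad) hcoh
      _ = ∫ ω, ⟪g ω, gradient f (x ω)⟫ ∂μ := integral_inner_condExp_left hm hg hgrad hgradm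
  have hsq : ∫ ω, ‖g ω‖ ^ 2 ∂μ ≤ G + σ ^ 2 :=
    calc ∫ ω, ‖g ω‖ ^ 2 ∂μ = ∫ ω, (μ[fun ω' => ‖g ω'‖ ^ 2|m]) ω ∂μ := (integral_condExp hm).symm
      _ ≤ ∫ ω, (‖gradient f (x ω)‖ ^ 2 + σ ^ 2) ∂μ :=
        integral_mono_ae integrable_condExp (hgrad.norm.integrable_sq.add (integrable_const _))
          hsecond
      _ = G + σ ^ 2 := by
        rw [integral_add hgrad.norm.integrable_sq (integrable_const _), integral_const]
        simp [G]
  have hLηG : L / 2 * η ^ 2 * G ≤ η * c / 2 * G := by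
    have := mul_le_mul_of_nonneg_right hηL (mul_nonneg hη hG)
    linarith
  calc _ ≤ _ := integral_comp_sub_smul_le hf hL hx hg η
    _ ≤ _ := by linarith [mul_le_mul_of_nonneg_left hinner hη,
      mul_le_mul_of_nonneg_left hsq (by positivity : (0 : ℝ) ≤ L / 2 * η ^ 2)]

end Descent

theorem sum_Icc_le_sub_add_sum_of_le_sub_add {F u v : ℕ → ℝ}
    (h : ∀ t ≥ 1, F (t + 1) ≤ F t - u t + v t) (T : ℕ) :
    ∑ t ∈ Icc 1 T, u t ≤ F 1 - F (T + 1) + ∑ t ∈ Icc 1 T, v t := by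
  induction T with
  | zero => simp
  | succ T ih =>
    rw [sum_Icc_succ_top (by omega), sum_Icc_succ_top (by omega)]
    linarith [h (T + 1) (by omega)]

theorem sum_Icc_inv_le_one_add_log (n : ℕ) : ∑ i ∈ Icc 1 n, (i : ℝ)⁻¹ ≤ 1 + log n := by
  simpa [harmonic_eq_sum_Icc] using harmonic_le_one_add_log n

theorem inf'_mul_sqrt_le_sum_div_sqrt {G : ℕ → ℝ} (hG : ∀ t, 0 ≤ G t) {T : ℕ}
    (hne : (Icc 1 T).Nonempty) :
    (Icc 1 T).inf' hne G * √T ≤ ∑ t ∈ Icc 1 T, G t / √t := by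
  calc (Icc 1 T).inf' hne G * √T = ∑ t ∈ Icc 1 T, (Icc 1 T).inf' hne G / √T := by
        rw [sum_const, Nat.card_Icc, nsmul_eq_mul, Nat.add_sub_cancel, mul_div_left_comm,
          div_sqrt]
    _ ≤ ∑ t ∈ Icc 1 T, G t / √t := by
      refine sum_le_sum fun t ht => div_le_div₀ (hG t) (inf'_le _ ht) ?_ ?_
      · exact sqrt_pos.2 (by exact_mod_cast (mem_Icc.1 ht).1)
      · exact sqrt_le_sqrt (by exact_mod_cast (mem_Icc.1 ht).2)

theorem inf'_le_of_le_sub_div_sqrt_add_div {F G : ℕ → ℝ} {a b Fmin : ℝ} (ha : 0 < a)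
    (hb : 0 ≤ b) (hG : ∀ t, 0 ≤ G t) (hstep : ∀ t ≥ 1, F (t + 1) ≤ F t - a * (G t / √t) + b / t)
    {T : ℕ} (hne : (Icc 1 T).Nonempty) (hmin : Fmin ≤ F (T + 1)) :
    (Icc 1 T).inf' hne G ≤ ((F 1 - Fmin) / a + b / a * (1 + log T)) / √T := by
  have hT : 0 < √(T : ℝ) := sqrt_pos.2 (by exact_mod_cast (nonempty_Icc.1 hne))
  have htele := sum_Icc_le_sub_add_sum_of_le_sub_add hstep T
  simp only [← mul_sum, div_eq_mul_inv b] at htele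
  have hharm := mul_le_mul_of_nonneg_left (sum_Icc_inv_le_one_add_log T) hb
  rw [le_div_iff₀ hT]
  calc (Icc 1 T).inf' hne G * √T ≤ ∑ t ∈ Icc 1 T, G t / √t :=
        inf'_mul_sqrt_le_sum_div_sqrt hG hne
    _ ≤ ((F 1 - Fmin) + b * (1 + log T)) / a := by rw [le_div_iff₀' ha]; linarith
    _ = (F 1 - Fmin) / a + b / a * (1 + log T) := by ring

section StepSize

variable {L μc : ℝ} {K t : ℕ}

noncomputable def stepSize (L μc : ℝ) (K t : ℕ) : ℝ := μc / (L * √(K * t))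

theorem mul_stepSize_le (hL : 0 < L) (hμc : 0 ≤ μc) (hK : 1 ≤ K) (ht : 1 ≤ t) :
    L * stepSize L μc K t ≤ μc := by
  have hKt : (1 : ℝ) ≤ K * t := one_le_mul_of_one_le_of_one_le (by exact_mod_cast hK)
    (by exact_mod_cast ht)
  rw [stepSize, ← mul_div_assoc, mul_div_mul_left _ _ hL.ne']
  exact div_le_self hμc (one_le_sqrt.2 hKt)

theorem stepSize_mul_div_two (hL : 0 < L) (hK : 1 ≤ K) (ht : 1 ≤ t) :
    stepSize L μc K t * μc / 2 = μc ^ 2 / (2 * L * √K) / √t := by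
  have hK' : (0 : ℝ) < K := by exact_mod_cast hK
  have ht' : (0 : ℝ) < t := by exact_mod_cast ht
  rw [stepSize, sqrt_mul hK'.le]
  field_simp

theorem half_mul_stepSize_sq (hL : 0 < L) (hK : 1 ≤ K) (ht : 1 ≤ t) :
    L / 2 * stepSize L μc K t ^ 2 = μc ^ 2 / (2 * L * K) / t := by
  have hK' : (0 : ℝ) < K := by exact_mod_cast hK
  have ht' : (0 : ℝ) < t := by exact_mod_cast ht
  rw [stepSize, div_pow, mul_pow, sq_sqrt (by positivity)]
  field_simp

theorem inf'_le_of_le_sub_stepSize {F G : ℕ → ℝ} {σ Fmin : ℝ} {T : ℕ} (hL : 0 < L)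
    (hμc : 0 < μc) (hK : 1 ≤ K) (hG : ∀ t, 0 ≤ G t)
    (hstep : ∀ t ≥ 1, F (t + 1) ≤
      F t - stepSize L μc K t * μc / 2 * G t + L / 2 * stepSize L μc K t ^ 2 * σ ^ 2)
    (hne : (Icc 1 T).Nonempty) (hmin : Fmin ≤ F (T + 1)) :
    (Icc 1 T).inf' hne G ≤
      (2 * √K * L * (F 1 - Fmin) / μc ^ 2 + √K * σ ^ 2 * (1 + log T)) / √T := by
  have hK' : (1 : ℝ) ≤ K := by exact_mod_cast hK
  have hsK : 1 ≤ √(K : ℝ) := one_le_sqrt.2 hK'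
  have hlog : 0 ≤ 1 + log T := add_nonneg zero_le_one (log_natCast_nonneg T)
  have hstep' : ∀ t ≥ 1, F (t + 1) ≤
      F t - μc ^ 2 / (2 * L * √K) * (G t / √t) + μc ^ 2 * σ ^ 2 / (2 * L * K) / t := by
    intro t ht
    refine (hstep t ht).trans_eq ?_
    rw [stepSize_mul_div_two hL hK ht, half_mul_stepSize_sq hL hK ht]
    ring
  refine (inf'_le_of_le_sub_div_sqrt_add_div (by positivity) (by positivity) hG hstep' hne
    hmin).trans ?_
  have hgap : (F 1 - Fmin) / (μc ^ 2 / (2 * L * √K)) = 2 * √K * L * (F 1 - Fmin) / μc ^ 2 := by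
    field_simp
  have hnoise : μc ^ 2 * σ ^ 2 / (2 * L * K) / (μc ^ 2 / (2 * L * √K)) ≤ √K * σ ^ 2 := by
    rw [div_le_iff₀ (by positivity),
      show √K * σ ^ 2 * (μc ^ 2 / (2 * L * √K)) = μc ^ 2 * σ ^ 2 / (2 * L) by field_simp]
    exact div_le_div_of_nonneg_left (by positivity) (by positivity) (by nlinarith)
  rw [hgap]
  gcongr

end StepSize

theorem stmt7_general {Ω : Type*} [m0 : MeasurableSpace Ω] (μ : Measure Ω) [IsProbabilityMeasure μ]
    {d : ℕ} (f : EuclideanSpace ℝ (Fin d) → ℝ) (L μc σ : ℝ) (K : ℕ)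
    (hL : 0 < L) (hμc : 0 < μc) (hK : 1 ≤ K)
    (hf : ContDiff ℝ 1 f)
    (hlip : ∀ x y, ‖gradient f x - gradient f y‖ ≤ L * ‖x - y‖)
    (θstar θ₀ : EuclideanSpace ℝ (Fin d)) (hbelow : ∀ x, f θstar ≤ f x)
    (θ gh : ℕ → Ω → EuclideanSpace ℝ (Fin d))
    (ℱ : ℕ → MeasurableSpace Ω) (hℱ : ∀ t, ℱ t ≤ m0)
    (hθ1 : θ 1 = fun _ => θ₀)
    (hθmeas : ∀ t, StronglyMeasurable[ℱ t] (θ t))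
    (hghL2 : ∀ t, MemLp (gh t) 2 μ)
    (hupdate : ∀ t ≥ 1, θ (t + 1) =
      fun ω => θ t ω - (μc / (L * Real.sqrt (K * t))) • gh t ω)
    (hcoh : ∀ t ≥ 1, ∀ᵐ ω ∂μ,
      μc * ‖gradient f (θ t ω)‖ ^ 2 ≤ ⟪(μ[gh t | ℱ t]) ω, gradient f (θ t ω)⟫)
    (hsecond : ∀ t ≥ 1, ∀ᵐ ω ∂μ,
      (μ[fun ω' => ‖gh t ω'‖ ^ 2 | ℱ t]) ω ≤ ‖gradient f (θ t ω)‖ ^ 2 + σ ^ 2)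
    (T : ℕ) (hne : (Finset.Icc 1 T).Nonempty) :
    (Finset.Icc 1 T).inf' hne (fun t => ∫ ω, ‖gradient f (θ t ω)‖ ^ 2 ∂μ) ≤
      (2 * Real.sqrt K * L * (f θ₀ - f θstar) / μc ^ 2 +
        Real.sqrt K * σ ^ 2 * (1 + Real.log T)) / Real.sqrt T := by
  have hdiff : Differentiable ℝ f := hf.differentiable one_ne_zero
  have hLip : LipschitzWith ⟨L, hL.le⟩ (gradient f) :=
    LipschitzWith.of_dist_le_mul fun x y => by rw [dist_eq_norm, dist_eq_norm]; exact hlip x y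
  have hθL2 : ∀ t ≥ 1, MemLp (θ t) 2 μ := by
    intro t ht
    induction t, ht using Nat.le_induction with
    | base => exact hθ1 ▸ memLp_const θ₀
    | succ t ht ih =>
      rw [hupdate t ht]
      exact ih.sub ((hghL2 t).const_smul (stepSize L μc K t))
  have hmin : f θstar ≤ ∫ ω, f (θ (T + 1) ω) ∂μ :=
    calc f θstar = ∫ _, f θstar ∂μ := by simp
      _ ≤ _ := integral_mono (integrable_const _)
        (integrable_comp_of_lipschitzWith_gradient hdiff hLip (hθL2 _ (by omega)))
        fun ω => hbelow _
  have hθ₀ : ∫ ω, f (θ 1 ω) ∂μ = f θ₀ := by simp [hθ1]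
  refine hθ₀ ▸ inf'_le_of_le_sub_stepSize (F := fun t => ∫ ω, f (θ t ω) ∂μ) hL hμc hK
    (fun t => integral_nonneg fun ω => by positivity) (fun t ht => ?_) hne hmin
  rw [hupdate t ht]
  exact integral_comp_sub_smul_le_of_condExp (hℱ t) hdiff hLip (hθmeas t) (hθL2 t ht) (hghL2 t)
    (div_nonneg hμc.le (by positivity)) (mul_stepSize_le hL hμc.le hK ht) (hcoh t ht)
    (hsecond t ht)

/-- Convergence of SGD-type updates with coherence-biased gradients: for `L`-smooth `f`
bounded below by `f θstar`, iterates `θ_{t+1} = θ_t - η_t • ĝ_t` with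
`⟪E[ĝ_t|ℱ_t], ∇f(θ_t)⟫ ≥ μc ‖∇f(θ_t)‖²`, `E[‖ĝ_t‖²|ℱ_t] ≤ ‖∇f(θ_t)‖² + σ²`,
`0 < μc ≤ 1`, and `η_t = μc/(L√(K t))`, the minimum expected squared gradient norm over
`t = 1, …, T` is at most `(2√K L (f θ₁ - f θstar)/μc² + √K σ² (1 + log T))/√T`. -/
theorem stmt7 {Ω : Type*} [m0 : MeasurableSpace Ω] (μ : Measure Ω) [IsProbabilityMeasure μ]
    {d : ℕ} (f : EuclideanSpace ℝ (Fin d) → ℝ) (L μc σ : ℝ) (K : ℕ)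
    (hL : 0 < L) (hμc : 0 < μc) (hμc1 : μc ≤ 1) (hK : 1 ≤ K)
    (hf : ContDiff ℝ 1 f)
    (hlip : ∀ x y, ‖gradient f x - gradient f y‖ ≤ L * ‖x - y‖)
    (θstar θ₀ : EuclideanSpace ℝ (Fin d)) (hbelow : ∀ x, f θstar ≤ f x)
    (θ gh : ℕ → Ω → EuclideanSpace ℝ (Fin d))
    (ℱ : ℕ → MeasurableSpace Ω) (hℱ : ∀ t, ℱ t ≤ m0)
    (hθ1 : θ 1 = fun _ => θ₀)
    (hθmeas : ∀ t, StronglyMeasurable[ℱ t] (θ t))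
    (hghL2 : ∀ t, MemLp (gh t) 2 μ)
    (hupdate : ∀ t ≥ 1, θ (t + 1) =
      fun ω => θ t ω - (μc / (L * Real.sqrt (K * t))) • gh t ω)
    (hcoh : ∀ t ≥ 1, ∀ᵐ ω ∂μ,
      μc * ‖gradient f (θ t ω)‖ ^ 2 ≤ ⟪(μ[gh t | ℱ t]) ω, gradient f (θ t ω)⟫)
    (hsecond : ∀ t ≥ 1, ∀ᵐ ω ∂μ,
      (μ[fun ω' => ‖gh t ω'‖ ^ 2 | ℱ t]) ω ≤ ‖gradient f (θ t ω)‖ ^ 2 + σ ^ 2)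
    (T : ℕ) (hT : 1 ≤ T) (hne : (Finset.Icc 1 T).Nonempty) :
    (Finset.Icc 1 T).inf' hne (fun t => ∫ ω, ‖gradient f (θ t ω)‖ ^ 2 ∂μ) ≤
      (2 * Real.sqrt K * L * (f θ₀ - f θstar) / μc ^ 2 +
        Real.sqrt K * σ ^ 2 * (1 + Real.log T)) / Real.sqrt T :=
  stmt7_general (m0 := m0) μ f L μc σ K hL hμc hK hf hlip θstar θ₀ hbelow θ gh ℱ hℱ hθ1 hθmeas hghL2
    hupdate hcoh hsecond T hne
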